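/- arXiv:1111.5302 — 2 statements merged into one kernel-verified Lean document; each statement's English description precedes it below -/
import Mathlib

section
/- Let V = {0, π/2}^N minus the two constant vectors, and let P : ℝ^N → ℝ^N denote the orthogonal projection onto the hyperplane {x ∈ ℝ^N : Σ_{i=1}^N x_i = 0}. Then the convex hull of the finite set { f(θ) : θ ∈ V } equals the image under P of the cube [−N/2, N/2]^N. (This polytope is, up to scaling, the Voronoi cell of the root lattice A_{N−1}.) -/
open Real Finset

/-- The Kuramoto interaction vector field `f_i(θ) = Σ_j sin (θ_j - θ_i)`. -/
noncomputable def kuraF (N : ℕ) (θ : Fin N → ℝ) : Fin N → ℝ :=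
  fun i => ∑ j, Real.sin (θ j - θ i)

/-- The vertex set `V`: the non-constant vertices of the cube `{0, π/2}^N`. -/
def vertexSet (N : ℕ) : Set (Fin N → ℝ) :=
  {θ | (∀ i, θ i = 0 ∨ θ i = Real.pi / 2) ∧ (∃ i, θ i = 0) ∧ ∃ j, θ j = Real.pi / 2}

/-- Orthogonal projection of `ℝ^N` onto the hyperplane `{x | Σ_i x_i = 0}`. -/
noncomputable def meanZeroProj (N : ℕ) (x : Fin N → ℝ) : Fin N → ℝ :=
  fun i => x i - (∑ j, x j) / N

/-!
At the vertex of `{0, π/2}^N` whose `π/2`-entries form `S`, the field `f` equals `#S • 1 - N • 1_S`,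
which is also the projection of the corner of `[-N/2, N/2]^N` equal to `-N/2` on `S` and `N/2` off
`S`. The cube is the convex hull of its corners and the projection is linear, so its image is the
convex hull of these vectors. The two constant corners project to `0`, which is already the midpoint
of the images of `S` and of its complement for any nonempty proper `S`.
-/

noncomputable def cubeVertex (N : ℕ) (S : Finset (Fin N)) : Fin N → ℝ :=
  fun k => if k ∈ S then -(N : ℝ) / 2 else (N : ℝ) / 2

noncomputable def kuraVertex (N : ℕ) (S : Finset (Fin N)) : Fin N → ℝ :=
  fun k => #S - if k ∈ S then (N : ℝ) else 0

lemma kuraF_ite_mem (N : ℕ) (S : Finset (Fin N)) :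
    kuraF N (fun k => if k ∈ S then π / 2 else 0) = kuraVertex N S := by
  funext i
  have hsin : ∀ j, sin ((if j ∈ S then π / 2 else 0) - (if i ∈ S then π / 2 else 0))
      = (if j ∈ S then 1 else 0) - (if i ∈ S then 1 else 0) := by
    intro j; split_ifs <;> simp
  simp only [kuraF, kuraVertex, hsin]
  rw [Finset.sum_sub_distrib, Finset.sum_const, Finset.sum_boole, Finset.filter_mem_eq_inter,
    Finset.univ_inter, Finset.card_univ, Fintype.card_fin, nsmul_eq_mul]
  split_ifs <;> ring

lemma meanZeroProj_comp_cubeVertex (N : ℕ) : meanZeroProj N ∘ cubeVertex N = kuraVertex N := by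
  funext S i
  have hN : (N : ℝ) ≠ 0 := by have := i.pos; positivity
  have hvertex : ∀ k, cubeVertex N S k = N / 2 - if k ∈ S then (N : ℝ) else 0 := by
    intro k; unfold cubeVertex; split_ifs <;> ring
  simp only [Function.comp, meanZeroProj, kuraVertex, hvertex, Finset.sum_sub_distrib,
    Finset.sum_ite_mem, Finset.univ_inter, Finset.sum_const, Finset.card_univ, Fintype.card_fin,
    nsmul_eq_mul]
  field_simp
  ring

lemma kuraVertex_empty (N : ℕ) : kuraVertex N ∅ = 0 := by
  funext i; simp [kuraVertex]

lemma kuraVertex_univ (N : ℕ) : kuraVertex N univ = 0 := by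
  funext i; simp [kuraVertex]

lemma kuraVertex_compl (N : ℕ) (S : Finset (Fin N)) : kuraVertex N Sᶜ = -kuraVertex N S := by
  funext i
  simp only [kuraVertex, Finset.card_compl, Fintype.card_fin, Finset.mem_compl, Pi.neg_apply,
    Nat.cast_sub (S.card_le_univ.trans_eq (Fintype.card_fin N))]
  split_ifs <;> ring

lemma isLinearMap_meanZeroProj (N : ℕ) : IsLinearMap ℝ (meanZeroProj N) where
  map_add x y := by
    funext i; simp only [meanZeroProj, Pi.add_apply, Finset.sum_add_distrib]; ring
  map_smul c x := by
    funext i; simp only [meanZeroProj, Pi.smul_apply, smul_eq_mul, ← Finset.mul_sum]; ring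

lemma range_cubeVertex (N : ℕ) :
    Set.range (cubeVertex N) = Set.univ.pi fun _ => {-(N : ℝ) / 2, (N : ℝ) / 2} := by
  ext x
  simp only [Set.mem_range, Set.mem_univ_pi, Set.mem_insert_iff, Set.mem_singleton_iff]
  constructor
  · rintro ⟨S, rfl⟩ i
    unfold cubeVertex; split_ifs <;> simp
  · intro hx
    refine ⟨univ.filter fun i => x i = -(N : ℝ) / 2, funext fun i => ?_⟩
    rcases hx i with h | h <;> simp [cubeVertex, h]

lemma cube_eq_convexHull_range_cubeVertex (N : ℕ) :
    {x : Fin N → ℝ | ∀ i, x i ∈ Set.Icc (-(N : ℝ) / 2) ((N : ℝ) / 2)}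
      = convexHull ℝ (Set.range (cubeVertex N)) := by
  have h : -(N : ℝ) / 2 ≤ (N : ℝ) / 2 := by linarith [(N.cast_nonneg : (0 : ℝ) ≤ N)]
  rw [range_cubeVertex, convexHull_pi, convexHull_pair, segment_eq_Icc h]
  ext x; simp only [Set.mem_ofPred_eq, Set.mem_univ_pi]

lemma vertexSet_eq_image (N : ℕ) :
    vertexSet N = (fun S k => if k ∈ S then π / 2 else 0) '' {S | S.Nonempty ∧ S ≠ univ} := by
  ext θ
  constructor
  · rintro ⟨hθ, ⟨i, hi⟩, ⟨j, hj⟩⟩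
    refine ⟨univ.filter fun k => θ k = π / 2, ⟨⟨j, by simpa⟩, ?_⟩, funext fun k => ?_⟩
    · exact fun h => by simpa [hi, pi_div_two_pos.ne] using Finset.eq_univ_iff_forall.1 h i
    · rcases hθ k with h | h <;> simp [h, pi_div_two_pos.ne]
  · rintro ⟨S, ⟨⟨j, hj⟩, hS⟩, rfl⟩
    obtain ⟨i, hi⟩ : ∃ i, i ∉ S := by simpa [Finset.eq_univ_iff_forall] using hS
    exact ⟨fun k => by by_cases hk : k ∈ S <;> simp [hk], ⟨i, by simp [hi]⟩, ⟨j, by simp [hj]⟩⟩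

lemma convexHull_insert_of_mem_convexHull {𝕜 E : Type*} [Semiring 𝕜] [PartialOrder 𝕜]
    [AddCommMonoid E] [Module 𝕜 E] {s : Set E} {x : E}
    (hx : x ∈ convexHull 𝕜 s) : convexHull 𝕜 (insert x s) = convexHull 𝕜 s :=
  (convexHull_min (Set.insert_subset hx (subset_convexHull 𝕜 s)) (convex_convexHull 𝕜 s)).antisymm
    (convexHull_mono (Set.subset_insert x s))

lemma range_kuraVertex (N : ℕ) :
    Set.range (kuraVertex N) = insert 0 (kuraVertex N '' {S | S.Nonempty ∧ S ≠ univ}) := by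
  ext v
  constructor
  · rintro ⟨S, rfl⟩
    by_cases hempty : S = ∅
    · exact .inl (hempty ▸ kuraVertex_empty N)
    by_cases huniv : S = univ
    · exact .inl (huniv ▸ kuraVertex_univ N)
    exact .inr ⟨S, ⟨Finset.nonempty_iff_ne_empty.2 hempty, huniv⟩, rfl⟩
  · rintro (rfl | ⟨S, -, rfl⟩)
    exacts [⟨∅, kuraVertex_empty N⟩, ⟨S, rfl⟩]

lemma zero_mem_convexHull_kuraVertex {N : ℕ} (hN : 2 ≤ N) :
    (0 : Fin N → ℝ) ∈ convexHull ℝ (kuraVertex N '' {S | S.Nonempty ∧ S ≠ univ}) := by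
  set S : Finset (Fin N) := {⟨0, by omega⟩}
  have hS : S ≠ univ := fun h => by
    have := congrArg Finset.card h
    simp only [S, Finset.card_singleton, Finset.card_univ, Fintype.card_fin] at this
    omega
  have hmem : kuraVertex N S ∈ kuraVertex N '' {S | S.Nonempty ∧ S ≠ univ} :=
    ⟨S, ⟨Finset.singleton_nonempty _, hS⟩, rfl⟩
  have hmem_compl : -kuraVertex N S ∈ kuraVertex N '' {S | S.Nonempty ∧ S ≠ univ} :=
    ⟨Sᶜ, ⟨(Sᶜ.compl_ne_univ_iff_nonempty).1 (by rwa [compl_compl]),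
      (S.compl_ne_univ_iff_nonempty).2 (Finset.singleton_nonempty _)⟩, kuraVertex_compl N S⟩
  convert (convex_convexHull ℝ _) (subset_convexHull ℝ _ hmem) (subset_convexHull ℝ _ hmem_compl)
    (by norm_num : (0 : ℝ) ≤ 1 / 2) (by norm_num : (0 : ℝ) ≤ 1 / 2) (by norm_num) using 1
  module

/-- The convex hull of the images of the non-constant vertices of the cube equals the
projection onto the mean-zero hyperplane of the cube `[-N/2, N/2]^N`: up to scaling,
the Voronoi cell of the root lattice `A_{N-1}`. -/
theorem stmt11 (N : ℕ) (hN : 2 ≤ N) :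
    convexHull ℝ (kuraF N '' vertexSet N)
      = meanZeroProj N '' {x | ∀ i, x i ∈ Set.Icc (-(N : ℝ) / 2) ((N : ℝ) / 2)} := by
  rw [cube_eq_convexHull_range_cubeVertex, (isLinearMap_meanZeroProj N).image_convexHull,
    ← Set.range_comp, meanZeroProj_comp_cubeVertex, range_kuraVertex,
    convexHull_insert_of_mem_convexHull (zero_mem_convexHull_kuraVertex hN), vertexSet_eq_image,
    Set.image_image]
  simp only [kuraF_ite_mem]
end

section
/- Define, for each ω ∈ ℝ^N with Σ ω_i = 0 and ‖ω‖ = 1, γ*(ω) := inf { γ > 0 : there exists θ ∈ ℝ^N with ω + γ f(θ) = 0 and J(θ) negative semidefinite with one-dimensional kernel }, and set γ_max(N) := sup γ*(ω) over all such unit mean-zero ω. Then 1/√(N(N−1)) ≤ γ_max(N) ≤ √2/√(N(N−1)). -/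
/-!
Upper bound: for a unit mean-zero `ω` take `θ_i = arcsin (ω_i / √2)`. Then `Σ_j sin θ_j = 0`, so
`f(θ) = -(Σ_j cos θ_j) sin θ` and `ω + γ f(θ) = 0` for `γ = √2 / Σ_j cos θ_j`. Since
`ω_i² + ω_j² ≤ 1`, every `cos (θ_i - θ_j)` is positive, so `-J(θ)` is the Laplacian of a complete
graph with positive weights: positive semidefinite with kernel spanned by `1`. Finally
`cos θ_j ≥ 1 - ω_j² / 2` gives `Σ_j cos θ_j ≥ N - 1/2 ≥ √(N(N-1))`.

Lower bound: `|f_i| ≤ N - 1`, so every admissible `γ` is at least `ω_i / (N - 1)`; for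
`ω = (N - 1, -1, …, -1) / √(N(N-1))` this is `1 / √(N(N-1))`, and the admissible set is nonempty
by the upper-bound construction.
-/

open Real Matrix Finset

/-- The Jacobian `J(θ)`: `J_ij = cos (θ_i - θ_j)` off the diagonal and
`J_ii = -Σ_{k ≠ i} cos (θ_k - θ_i)`. -/
noncomputable def Jmat (N : ℕ) (θ : Fin N → ℝ) : Matrix (Fin N) (Fin N) ℝ :=
  Matrix.of fun i j =>
    if i = j then -∑ k ∈ Finset.univ \ {i}, Real.cos (θ k - θ i)
    else Real.cos (θ i - θ j)

/-- `θ` is a stable fully synchronized configuration for frequency `ω` and coupling `γ`: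
`ω + γ f(θ) = 0` and `J(θ)` is negative semidefinite with one-dimensional kernel. -/
def IsStableSync (N : ℕ) (ω : Fin N → ℝ) (γ : ℝ) (θ : Fin N → ℝ) : Prop :=
  (∀ i, ω i + γ * kuraF N θ i = 0) ∧ (-(Jmat N θ)).PosSemidef ∧
    Module.finrank ℝ (LinearMap.ker (Matrix.toLin' (Jmat N θ))) = 1

/-- The critical coupling `γ*(ω)`. -/
noncomputable def gammaStar (N : ℕ) (ω : Fin N → ℝ) : ℝ :=
  sInf {γ : ℝ | 0 < γ ∧ ∃ θ : Fin N → ℝ, IsStableSync N ω γ θ}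

/-- `γ_max(N)`: the supremum of `γ*(ω)` over unit mean-zero frequency vectors. -/
noncomputable def gammaMax (N : ℕ) : ℝ :=
  sSup {g : ℝ | ∃ ω : Fin N → ℝ, (∑ i, ω i = 0) ∧ (∑ i, ω i ^ 2 = 1) ∧
    g = gammaStar N ω}

namespace Matrix

variable {ι : Type*}

lemma mul_sq_sub_nonneg_of_offDiag_nonneg {W : Matrix ι ι ℝ} (hpos : ∀ i j, i ≠ j → 0 ≤ W i j)
    (x : ι → ℝ) (i j : ι) : 0 ≤ W i j * (x i - x j) ^ 2 := by
  rcases eq_or_ne i j with rfl | hij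
  · simp
  · exact mul_nonneg (hpos i j hij) (sq_nonneg _)

variable [Fintype ι] [DecidableEq ι] (W : Matrix ι ι ℝ)

def weightedLaplacian : Matrix ι ι ℝ := diagonal (W *ᵥ 1) - W

variable {W}

lemma isHermitian_weightedLaplacian (hW : W.IsSymm) : W.weightedLaplacian.IsHermitian := by
  simp only [weightedLaplacian, IsHermitian, conjTranspose_eq_transpose_of_trivial,
    transpose_sub, diagonal_transpose, hW.eq]

lemma weightedLaplacian_mulVec_one : W.weightedLaplacian *ᵥ 1 = 0 := by
  ext i
  simp [weightedLaplacian, sub_mulVec, mulVec_diagonal]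

lemma dotProduct_weightedLaplacian_mulVec (hW : W.IsSymm) (x : ι → ℝ) :
    x ⬝ᵥ (W.weightedLaplacian *ᵥ x) = (∑ i, ∑ j, W i j * (x i - x j) ^ 2) / 2 := by
  have hswap : ∑ i, ∑ j, W i j * x j ^ 2 = ∑ i, ∑ j, W i j * x i ^ 2 := by
    rw [Finset.sum_comm]
    simp only [hW.apply]
  have hexpand : ∑ i, ∑ j, W i j * (x i - x j) ^ 2 =
      ∑ i, ∑ j, W i j * x i ^ 2 + ∑ i, ∑ j, W i j * x j ^ 2
        - 2 * ∑ i, ∑ j, x i * (W i j * x j) := by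
    simp only [mul_sum, ← sum_add_distrib, ← sum_sub_distrib]
    exact sum_congr rfl fun i _ => sum_congr rfl fun j _ => by ring
  rw [hexpand, hswap]
  have hdiag : x ⬝ᵥ (diagonal (W *ᵥ 1) *ᵥ x) = ∑ i, ∑ j, W i j * x i ^ 2 := by
    refine sum_congr rfl fun i _ => ?_
    rw [mulVec_diagonal, mulVec, dotProduct, sum_mul, mul_sum]
    exact sum_congr rfl fun j _ => by simp only [Pi.one_apply]; ring
  have hoff : x ⬝ᵥ (W *ᵥ x) = ∑ i, ∑ j, x i * (W i j * x j) :=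
    sum_congr rfl fun i _ => mul_sum _ _ _
  rw [weightedLaplacian, sub_mulVec, dotProduct_sub, hdiag, hoff]
  ring

lemma weightedLaplacian_posSemidef (hW : W.IsSymm) (hpos : ∀ i j, i ≠ j → 0 ≤ W i j) :
    W.weightedLaplacian.PosSemidef := by
  refine .of_dotProduct_mulVec_nonneg (isHermitian_weightedLaplacian hW) fun x => ?_
  rw [star_trivial, dotProduct_weightedLaplacian_mulVec hW]
  exact div_nonneg (sum_nonneg fun i _ => sum_nonneg fun j _ =>
    mul_sq_sub_nonneg_of_offDiag_nonneg hpos x i j) zero_le_two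

lemma ker_toLin'_weightedLaplacian [Nonempty ι] (hW : W.IsSymm)
    (hpos : ∀ i j, i ≠ j → 0 < W i j) :
    LinearMap.ker (toLin' W.weightedLaplacian) = Submodule.span ℝ {1} := by
  refine le_antisymm (fun x hx => ?_) ?_
  · rw [LinearMap.mem_ker, toLin'_apply] at hx
    have hnn := mul_sq_sub_nonneg_of_offDiag_nonneg (fun i j hij => (hpos i j hij).le) x
    have hsum : ∑ i, ∑ j, W i j * (x i - x j) ^ 2 = 0 := by
      have := dotProduct_weightedLaplacian_mulVec hW x
      rw [hx, dotProduct_zero] at this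
      linarith
    have hterm : ∀ i j, W i j * (x i - x j) ^ 2 = 0 := fun i j =>
      (sum_eq_zero_iff_of_nonneg fun j _ => hnn i j).1
        ((sum_eq_zero_iff_of_nonneg fun i _ => sum_nonneg fun j _ => hnn i j).1 hsum i
          (mem_univ i)) j (mem_univ j)
    obtain ⟨i₀⟩ := ‹Nonempty ι›
    refine Submodule.mem_span_singleton.2 ⟨x i₀, funext fun j => ?_⟩
    rcases eq_or_ne j i₀ with rfl | hj
    · simp
    · have := hterm j i₀
      rw [mul_eq_zero, or_iff_right (hpos j i₀ hj).ne', sq_eq_zero_iff, sub_eq_zero] at this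
      simp [this]
  · rw [Submodule.span_le, Set.singleton_subset_iff, SetLike.mem_coe, LinearMap.mem_ker,
      toLin'_apply]
    exact weightedLaplacian_mulVec_one

lemma finrank_ker_toLin'_weightedLaplacian [Nonempty ι] (hW : W.IsSymm)
    (hpos : ∀ i j, i ≠ j → 0 < W i j) :
    Module.finrank ℝ (LinearMap.ker (toLin' W.weightedLaplacian)) = 1 := by
  rw [ker_toLin'_weightedLaplacian hW hpos]
  exact finrank_span_singleton one_ne_zero

end Matrix

section Kuramoto

variable {N : ℕ}

noncomputable def phaseCosMatrix {ι : Type*} (θ : ι → ℝ) : Matrix ι ι ℝ :=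
  of fun i j => cos (θ i - θ j)

lemma isSymm_phaseCosMatrix {ι : Type*} (θ : ι → ℝ) : (phaseCosMatrix θ).IsSymm := by
  ext i j
  simp only [phaseCosMatrix, transpose_apply, of_apply, ← neg_sub (θ i), cos_neg]

lemma neg_Jmat_eq_weightedLaplacian (θ : Fin N → ℝ) :
    -Jmat N θ = (phaseCosMatrix θ).weightedLaplacian := by
  ext i j
  rcases eq_or_ne i j with rfl | hij
  · simp only [Jmat, sdiff_singleton_eq_erase, mem_univ, sum_erase_eq_sub, sub_self, cos_zero,
      neg_sub, Matrix.neg_apply, of_apply, ↓reduceIte, weightedLaplacian, phaseCosMatrix,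
      Matrix.sub_apply, diagonal_apply_eq, mulVec, dotProduct, Pi.one_apply, mul_one, sub_left_inj]
    exact sum_congr rfl fun k _ => by rw [← neg_sub, cos_neg]
  · simp [Jmat, weightedLaplacian, phaseCosMatrix, hij]

lemma isStableSync_of_cos_sub_pos (hN : 0 < N) {ω : Fin N → ℝ} {γ : ℝ} {θ : Fin N → ℝ}
    (heq : ∀ i, ω i + γ * kuraF N θ i = 0) (hcos : ∀ i j, i ≠ j → 0 < cos (θ i - θ j)) :
    IsStableSync N ω γ θ := by
  have : Nonempty (Fin N) := ⟨⟨0, hN⟩⟩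
  have hker : LinearMap.ker (toLin' (Jmat N θ)) = LinearMap.ker (toLin' (-Jmat N θ)) := by
    rw [map_neg, LinearMap.ker_neg]
  refine ⟨heq, ?_, ?_⟩
  · rw [neg_Jmat_eq_weightedLaplacian]
    exact weightedLaplacian_posSemidef (isSymm_phaseCosMatrix θ) fun i j hij => (hcos i j hij).le
  · rw [hker, neg_Jmat_eq_weightedLaplacian]
    exact finrank_ker_toLin'_weightedLaplacian (isSymm_phaseCosMatrix θ) hcos

lemma kuraF_eq_of_sum_sin_eq_zero {θ : Fin N → ℝ} (h : ∑ j, sin (θ j) = 0) (i : Fin N) :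
    kuraF N θ i = -sin (θ i) * ∑ j, cos (θ j) := by
  simp only [kuraF, sin_sub, sum_sub_distrib, ← sum_mul, h, zero_mul, zero_sub]
  ring

lemma abs_kuraF_le (θ : Fin N → ℝ) (i : Fin N) : |kuraF N θ i| ≤ N - 1 := by
  calc |kuraF N θ i| = |∑ j ∈ univ.erase i, sin (θ j - θ i)| := by
        rw [kuraF, sum_erase _ (by simp)]
    _ ≤ ∑ j ∈ univ.erase i, |sin (θ j - θ i)| := abs_sum_le_sum_abs _ _
    _ ≤ ∑ j ∈ univ.erase i, 1 := sum_le_sum fun j _ => abs_sin_le_one _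
    _ = N - 1 := by simp [card_erase_of_mem, Nat.cast_pred i.pos]

lemma le_mul_of_isStableSync {ω : Fin N → ℝ} {γ : ℝ} {θ : Fin N → ℝ}
    (h : IsStableSync N ω γ θ) (hγ : 0 ≤ γ) (i : Fin N) : ω i ≤ γ * (N - 1) :=
  calc ω i = γ * -kuraF N θ i := by linarith [h.1 i]
    _ ≤ γ * (N - 1) := mul_le_mul_of_nonneg_left ((neg_le_abs _).trans (abs_kuraF_le θ i)) hγ

end Kuramoto

lemma one_sub_sq_le_cos_arcsin (x : ℝ) : 1 - x ^ 2 ≤ cos (arcsin x) := by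
  rw [cos_arcsin]
  rcases le_or_gt (1 - x ^ 2) 0 with h | h
  · exact h.trans (sqrt_nonneg _)
  · rw [Real.le_sqrt h.le h.le]
    nlinarith [sq_nonneg x]

lemma cos_arcsin_sub_arcsin_pos {x y : ℝ} (h : x ^ 2 + y ^ 2 < 1) :
    0 < cos (arcsin x - arcsin y) := by
  have hx := abs_le.1 (sq_le_one_iff_abs_le_one x |>.1 (by nlinarith [sq_nonneg y]))
  have hy := abs_le.1 (sq_le_one_iff_abs_le_one y |>.1 (by nlinarith [sq_nonneg x]))
  rw [cos_sub, cos_arcsin, cos_arcsin, sin_arcsin hx.1 hx.2, sin_arcsin hy.1 hy.2,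
    ← sqrt_mul (by nlinarith [sq_nonneg y])]
  have : |x * y| < √((1 - x ^ 2) * (1 - y ^ 2)) := by
    rw [Real.lt_sqrt (abs_nonneg _), sq_abs]
    nlinarith
  linarith [neg_abs_le (x * y)]

section Bounds

variable {N : ℕ}

def stableCouplings (N : ℕ) (ω : Fin N → ℝ) : Set ℝ :=
  {γ : ℝ | 0 < γ ∧ ∃ θ : Fin N → ℝ, IsStableSync N ω γ θ}

noncomputable def arcsinPhase (ω : Fin N → ℝ) : Fin N → ℝ := fun i => arcsin (ω i / √2)

lemma sub_le_sum_cos_arcsinPhase (ω : Fin N → ℝ) :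
    (N : ℝ) - (∑ i, ω i ^ 2) / 2 ≤ ∑ i, cos (arcsinPhase ω i) :=
  calc (N : ℝ) - (∑ i, ω i ^ 2) / 2 = ∑ i, (1 - (ω i / √2) ^ 2) := by
        simp [sum_sub_distrib, div_pow, sum_div]
    _ ≤ ∑ i, cos (arcsinPhase ω i) := sum_le_sum fun i _ => one_sub_sq_le_cos_arcsin _

lemma sum_cos_arcsinPhase_pos (hN : 0 < N) {ω : Fin N → ℝ} (h2 : ∑ i, ω i ^ 2 < 2) :
    0 < ∑ i, cos (arcsinPhase ω i) := by
  have : (1 : ℝ) ≤ N := by exact_mod_cast hN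
  linarith [sub_le_sum_cos_arcsinPhase ω]

lemma isStableSync_arcsinPhase (hN : 0 < N) {ω : Fin N → ℝ} (h0 : ∑ i, ω i = 0)
    (h2 : ∑ i, ω i ^ 2 < 2) :
    IsStableSync N ω (√2 / ∑ j, cos (arcsinPhase ω j)) (arcsinPhase ω) := by
  have hsq : ∀ i, (ω i / √2) ^ 2 = ω i ^ 2 / 2 := fun i => by rw [div_pow, sq_sqrt zero_le_two]
  have hle : ∀ i, ω i ^ 2 ≤ ∑ j, ω j ^ 2 := fun i =>
    single_le_sum (fun j _ => sq_nonneg (ω j)) (mem_univ i)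
  have hsin : ∀ i, sin (arcsinPhase ω i) = ω i / √2 := fun i => by
    have := abs_le.1 (sq_le_one_iff_abs_le_one (ω i / √2) |>.1 (by rw [hsq]; linarith [hle i]))
    exact sin_arcsin this.1 this.2
  have hC := (sum_cos_arcsinPhase_pos hN h2).ne'
  refine isStableSync_of_cos_sub_pos hN (fun i => ?_) fun i j hij => ?_
  · rw [kuraF_eq_of_sum_sin_eq_zero (by simp only [hsin, ← sum_div, h0, zero_div]), hsin]
    field_simp
    ring
  · apply cos_arcsin_sub_arcsin_pos
    have := sum_le_sum_of_subset_of_nonneg (subset_univ {i, j}) fun k _ _ => sq_nonneg (ω k)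
    rw [sum_pair hij] at this
    rw [hsq, hsq]
    linarith

lemma sqrt_two_div_sum_cos_mem_stableCouplings (hN : 0 < N) {ω : Fin N → ℝ}
    (h0 : ∑ i, ω i = 0) (h2 : ∑ i, ω i ^ 2 < 2) :
    √2 / ∑ j, cos (arcsinPhase ω j) ∈ stableCouplings N ω :=
  ⟨div_pos (by positivity) (sum_cos_arcsinPhase_pos hN h2), _, isStableSync_arcsinPhase hN h0 h2⟩

lemma gammaStar_le (hN : 0 < N) {ω : Fin N → ℝ} (h0 : ∑ i, ω i = 0) (h2 : ∑ i, ω i ^ 2 < 2) :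
    gammaStar N ω ≤ √2 / (N - (∑ i, ω i ^ 2) / 2) := by
  have hpos : 0 < (N : ℝ) - (∑ i, ω i ^ 2) / 2 := by
    have : (1 : ℝ) ≤ N := by exact_mod_cast hN
    linarith
  calc gammaStar N ω ≤ √2 / ∑ j, cos (arcsinPhase ω j) :=
        csInf_le ⟨0, fun γ hγ => hγ.1.le⟩ (sqrt_two_div_sum_cos_mem_stableCouplings hN h0 h2)
    _ ≤ √2 / (N - (∑ i, ω i ^ 2) / 2) :=
        div_le_div_of_nonneg_left (sqrt_nonneg 2) hpos (sub_le_sum_cos_arcsinPhase ω)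

lemma div_le_gammaStar (hN : 2 ≤ N) {ω : Fin N → ℝ} (h0 : ∑ i, ω i = 0)
    (h2 : ∑ i, ω i ^ 2 < 2) (i : Fin N) : ω i / (N - 1) ≤ gammaStar N ω := by
  have hN1 : (0 : ℝ) < N - 1 := by
    have : (2 : ℝ) ≤ N := by exact_mod_cast hN
    linarith
  refine le_csInf ⟨_, sqrt_two_div_sum_cos_mem_stableCouplings (by omega) h0 h2⟩ ?_
  rintro γ ⟨hγ, θ, hθ⟩
  exact (div_le_iff₀ hN1).2 (le_mul_of_isStableSync hθ hγ.le i)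

lemma exists_unit_one_div_sqrt_le_gammaStar (hN : 2 ≤ N) :
    ∃ ω : Fin N → ℝ, ∑ i, ω i = 0 ∧ ∑ i, ω i ^ 2 = 1 ∧
      1 / √(N * (N - 1)) ≤ gammaStar N ω := by
  obtain ⟨n, rfl⟩ : ∃ n, N = n + 1 := ⟨N - 1, by omega⟩
  have hn : (0 : ℝ) < n := by exact_mod_cast (by omega : 0 < n)
  push_cast
  simp only [add_sub_cancel_right]
  set c := 1 / √((n + 1) * n)
  have hc : c ^ 2 * ((n + 1) * n) = 1 := by
    rw [div_pow, sq_sqrt (by positivity)]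
    field_simp
  let ω : Fin (n + 1) → ℝ := Fin.cons (n * c) fun _ => -c
  have h0 : ∑ i, ω i = 0 := by simp [ω, Fin.sum_univ_succ]
  have h1 : ∑ i, ω i ^ 2 = 1 := by
    simp only [ω, Fin.sum_univ_succ, Fin.cons_zero, Fin.cons_succ, even_two, Even.neg_pow,
      sum_const, card_univ, Fintype.card_fin, nsmul_eq_mul]
    linear_combination hc
  refine ⟨ω, h0, h1, ?_⟩
  have := div_le_gammaStar hN h0 (by rw [h1]; norm_num) 0
  simpa [ω, hn.ne'] using this

lemma gammaStar_le_of_sum_sq_eq_one (hN : 2 ≤ N) {ω : Fin N → ℝ} (h0 : ∑ i, ω i = 0)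
    (h1 : ∑ i, ω i ^ 2 = 1) : gammaStar N ω ≤ √2 / √(N * (N - 1)) := by
  have hN' : (2 : ℝ) ≤ N := by exact_mod_cast hN
  refine (gammaStar_le (by omega) h0 (by rw [h1]; norm_num)).trans ?_
  rw [h1]
  refine div_le_div_of_nonneg_left (sqrt_nonneg 2) (sqrt_pos.2 (by nlinarith)) ?_
  rw [sqrt_le_left (by linarith)]
  nlinarith

end Bounds

theorem stmt15 (N : ℕ) (hN : 2 ≤ N) :
    1 / Real.sqrt ((N : ℝ) * ((N : ℝ) - 1)) ≤ gammaMax N ∧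
    gammaMax N ≤ Real.sqrt 2 / Real.sqrt ((N : ℝ) * ((N : ℝ) - 1)) := by
  obtain ⟨ω₀, h0, h1, hω₀⟩ := exists_unit_one_div_sqrt_le_gammaStar hN
  have hbdd : BddAbove {g : ℝ | ∃ ω : Fin N → ℝ, (∑ i, ω i = 0) ∧ (∑ i, ω i ^ 2 = 1) ∧
      g = gammaStar N ω} := by
    refine ⟨√2 / √(N * (N - 1)), ?_⟩
    rintro _ ⟨ω, h0, h1, rfl⟩
    exact gammaStar_le_of_sum_sq_eq_one hN h0 h1
  refine ⟨hω₀.trans (le_csSup hbdd ⟨ω₀, h0, h1, rfl⟩), csSup_le ⟨_, ω₀, h0, h1, rfl⟩ ?_⟩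
  rintro _ ⟨ω, h0, h1, rfl⟩
  exact gammaStar_le_of_sum_sq_eq_one hN h0 h1
end
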